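/- Every complex root z of the polynomial ρ(z) = z^12 − 2·z^11 + 2·z^10 − z^9 − z^3 + 2·z^2 − 2·z + 1 satisfies |z| = 1; moreover z = 1 is a root of multiplicity exactly 2 (i.e. (z−1)² divides ρ but (z−1)³ does not), and every root different from 1 is a simple root of ρ. -/

import Mathlib

open Polynomial

/-- The characteristic polynomial of the Quinlan–Tremaine 12-step method. -/
noncomputable def rhoQT : ℂ[X] :=
  X ^ 12 - 2 * X ^ 11 + 2 * X ^ 10 - X ^ 9 - X ^ 3 + 2 * X ^ 2 - 2 * X + 1

/-!
The characteristic polynomial factors as `ρ = (X - 1) (X⁹ - 1) (X² - X + 1)`. Every root is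
therefore a ninth or a sixth root of unity, hence of modulus one. The last two factors are
separable and have no common root (a root of `X² - X + 1` has `z³ = -1`, so `z⁹ = -1`), so
their product is separable: `1` is a double root of `ρ` and all other roots are simple.
-/

theorem Polynomial.Separable.rootMultiplicity_eq_one {R : Type*} [CommRing R] [Nontrivial R]
    {p : R[X]} (hp : p.Separable) {x : R} (hx : p.IsRoot x) : rootMultiplicity x p = 1 :=
  le_antisymm (rootMultiplicity_le_one_of_separable hp x) ((rootMultiplicity_pos hp.ne_zero).2 hx)

theorem Polynomial.separable_X_sq_sub_X_add_one {K : Type*} [Field K] (h3 : (3 : K) ≠ 0) :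
    (X ^ 2 - X + 1 : K[X]).Separable := by
  have hcube : (X ^ 3 - C (-1) : K[X]).Separable :=
    separable_X_pow_sub_C (-1) (by exact_mod_cast h3) (neg_ne_zero.2 one_ne_zero)
  refine hcube.of_dvd ⟨X + 1, ?_⟩
  simp only [map_neg, map_one]
  ring

theorem pow_three_eq_neg_one_of_sq_sub_add_one {R : Type*} [CommRing R] {z : R}
    (hz : z ^ 2 - z + 1 = 0) : z ^ 3 = -1 := by
  linear_combination (z + 1) * hz

theorem rhoQT_eq : rhoQT = (X - C 1) * ((X ^ 9 - 1) * (X ^ 2 - X + 1)) := by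
  rw [rhoQT, C_1]
  ring

theorem isRoot_rhoQT_iff {z : ℂ} : rhoQT.IsRoot z ↔ z ^ 9 = 1 ∨ z ^ 2 - z + 1 = 0 := by
  simp only [rhoQT_eq, IsRoot, eval_mul, eval_sub, eval_add, eval_pow, eval_X, eval_C, eval_one,
    mul_eq_zero, sub_eq_zero]
  constructor
  · rintro (rfl | h9 | h6)
    exacts [Or.inl (one_pow 9), Or.inl h9, Or.inr h6]
  · rintro (h9 | h6)
    exacts [Or.inr (Or.inl h9), Or.inr (Or.inr h6)]

theorem separable_rhoQT_cofactor : ((X ^ 9 - 1) * (X ^ 2 - X + 1) : ℂ[X]).Separable := by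
  have h9 : (X ^ 9 - 1 : ℂ[X]).Separable := by
    simpa using separable_X_pow_sub_C (1 : ℂ) (by norm_num) one_ne_zero
  refine h9.mul (separable_X_sq_sub_X_add_one (by norm_num)) ?_
  refine (isCoprime_iff_aeval_ne_zero_of_isAlgClosed ℂ ℂ _ _).2 fun z => ?_
  by_contra! ⟨h9, h6⟩
  simp only [aeval_def, eval₂_sub, eval₂_add, eval₂_X_pow, eval₂_X, eval₂_one,
    Algebra.algebraMap_self, sub_eq_zero] at h9 h6
  have h3 := pow_three_eq_neg_one_of_sq_sub_add_one h6
  have h9' : (z ^ 3) ^ 3 = 1 := by rw [← h9]; ring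
  norm_num [h3] at h9'

theorem rhoQT_ne_zero : rhoQT ≠ 0 := by
  rw [rhoQT_eq]
  exact mul_ne_zero (X_sub_C_ne_zero 1) separable_rhoQT_cofactor.ne_zero

theorem norm_eq_one_of_isRoot_rhoQT {z : ℂ} (hz : rhoQT.IsRoot z) : ‖z‖ = 1 := by
  rcases isRoot_rhoQT_iff.1 hz with h9 | h6
  · exact Complex.norm_eq_one_of_pow_eq_one h9 (by norm_num)
  · refine Complex.norm_eq_one_of_pow_eq_one (n := 6) ?_ (by norm_num)
    rw [show z ^ 6 = (z ^ 3) ^ 2 by ring, pow_three_eq_neg_one_of_sq_sub_add_one h6]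
    norm_num

theorem rootMultiplicity_rhoQT {z : ℂ} (hz : rhoQT.IsRoot z) :
    rootMultiplicity z rhoQT = (if z = 1 then 1 else 0) + 1 := by
  have hz' : ((X ^ 9 - 1) * (X ^ 2 - X + 1) : ℂ[X]).IsRoot z := by
    simpa [sub_eq_zero] using isRoot_rhoQT_iff.1 hz
  have hne := rhoQT_ne_zero
  rw [rhoQT_eq] at hne ⊢
  rw [rootMultiplicity_mul hne, rootMultiplicity_X_sub_C,
    separable_rhoQT_cofactor.rootMultiplicity_eq_one hz']

/-- Zero-stability of the Quinlan–Tremaine method: all roots of its characteristic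
polynomial lie on the unit circle, `z = 1` is a root of multiplicity exactly two,
and every other root is simple. -/
theorem quinlan_tremaine_zero_stable :
    (∀ z : ℂ, rhoQT.IsRoot z → ‖z‖ = 1) ∧
    ((X - 1) ^ 2 ∣ rhoQT ∧ ¬ (X - 1) ^ 3 ∣ rhoQT) ∧
    (∀ z : ℂ, z ≠ 1 → rhoQT.IsRoot z → rootMultiplicity z rhoQT = 1) := by
  have h1 : rootMultiplicity 1 rhoQT = 2 := by
    simpa using rootMultiplicity_rhoQT (isRoot_rhoQT_iff.2 (Or.inl (one_pow 9)))
  refine ⟨fun z hz => norm_eq_one_of_isRoot_rhoQT hz, ⟨?_, ?_⟩,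
    fun z hz1 hz => by simpa [hz1] using rootMultiplicity_rhoQT hz⟩
  · simpa using (le_rootMultiplicity_iff rhoQT_ne_zero).1 h1.ge
  · rw [← C_1, ← le_rootMultiplicity_iff rhoQT_ne_zero, h1]
    norm_num
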